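/- arXiv:2508.14725 — 3 statements merged into one kernel-verified Lean document; each statement's English description precedes it below -/
import Mathlib

section
/- Let Γ be a finite set of events, Γ_F, Γ_G ⊆ Γ disjoint subsets, V a set, and γ : V → 2^Γ a labeling, and define upd(v, L) = ((L ∩ γ(v)) ∩ Γ_G) ∪ ((L ∪ γ(v)) ∩ Γ_F). Let v : ℕ → V and L : ℕ → 2^Γ satisfy L(n+1) = upd(v(n), L(n)) for all n, and let a ∈ Γ_F with a ∉ L(0). Then the following are equivalent: (i) the event a occurs at least once along v (∃ n, a ∈ γ(v(n))); (ii) a is in the memory infinitely often (∀ i, ∃ j > i, a ∈ L(j)); (iii) a is eventually in the memory forever (∃ i, ∀ j ≥ i, a ∈ L(j)). -/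
/-- The memory update function: remove from the memory `L` all `ΓG`-events
that do not occur in the label of the current node `v` and add all
`ΓF`-events that occur in the label of `v`. -/
def upd {V Γ : Type} [DecidableEq Γ] (γ : V → Finset Γ) (ΓF ΓG : Finset Γ)
    (v : V) (L : Finset Γ) : Finset Γ :=
  ((L ∩ γ v) ∩ ΓG) ∪ ((L ∪ γ v) ∩ ΓF)

/-- for an `F`-event `a` not initially in the memory, `a` occurs
at least once along the node sequence iff `a` is in the memory infinitely
often iff `a` is eventually in the memory forever. -/
theorem fEvent_memory_tfae
    {V Γ : Type} [Fintype Γ] [DecidableEq Γ]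
    (ΓF ΓG : Finset Γ) (hdisj : Disjoint ΓF ΓG) (γ : V → Finset Γ)
    (v : ℕ → V) (L : ℕ → Finset Γ)
    (hL : ∀ n, L (n + 1) = upd γ ΓF ΓG (v n) (L n))
    (a : Γ) (ha : a ∈ ΓF) (ha0 : a ∉ L 0) :
    List.TFAE
      [(∃ n, a ∈ γ (v n)),
       (∀ i, ∃ j > i, a ∈ L j),
       (∃ i, ∀ j ≥ i, a ∈ L j)] := by
  have haG : a ∉ ΓG := Finset.disjoint_left.mp hdisj ha
  -- persistence: once in memory, stays forever
  have persist : ∀ n, a ∈ L n → ∀ m ≥ n, a ∈ L m := by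
    intro n hn m hm
    induction m with
    | zero => exact Nat.le_zero.mp hm ▸ hn
    | succ k ih =>
      rcases Nat.lt_or_ge n (k+1) with h | h
      · have hk : a ∈ L k := ih (by omega)
        rw [hL k]
        unfold upd
        simp [Finset.mem_union, Finset.mem_inter, hk, ha]
      · have : n = k + 1 := by omega
        exact this ▸ hn
  tfae_have 1 → 3
  · rintro ⟨n, hn⟩
    refine ⟨n + 1, fun j hj => persist (n+1) ?_ j hj⟩
    rw [hL n]; unfold upd
    simp [Finset.mem_union, Finset.mem_inter, hn, ha]
  tfae_have 3 → 2
  · rintro ⟨i, hi⟩ k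
    exact ⟨max (k+1) i, by omega, hi _ (le_max_right _ _)⟩
  tfae_have 2 → 1
  · intro h
    obtain ⟨j, hj, hmem⟩ := h 0
    -- trace back: a ∈ L j with j > 0 implies some occurrence
    clear hj
    induction j with
    | zero => exact absurd hmem ha0
    | succ k ih =>
      rw [hL k] at hmem
      unfold upd at hmem
      simp only [Finset.mem_union, Finset.mem_inter] at hmem
      rcases hmem with ⟨_, hG⟩ | ⟨hk, _⟩
      · exact absurd hG haG
      · rcases hk with h | h
        · exact ih h
        · exact ⟨k, h⟩
  tfae_finish
end

section
/- Let Γ be a finite set of events, Γ_F, Γ_G ⊆ Γ disjoint subsets, V a set, and γ : V → 2^Γ a labeling, and define upd(v, L) = ((L ∩ γ(v)) ∩ Γ_G) ∪ ((L ∪ γ(v)) ∩ Γ_F). Let v : ℕ → V and L : ℕ → 2^Γ satisfy L(n+1) = upd(v(n), L(n)) for all n, and let a ∈ Γ_G with a ∈ L(0). Then the following are equivalent: (i) the event a occurs at every step along v (∀ n, a ∈ γ(v(n))); (ii) a is in the memory at every step (∀ n, a ∈ L(n)); (iii) a is in the memory infinitely often (∀ i, ∃ j > i, a ∈ L(j));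 (iv) a is eventually in the memory forever (∃ i, ∀ j > i, a ∈ L(j)). -/
/-- for a `G`-event `a` initially in the memory, `a` occurs at
every step along the node sequence iff `a` is in the memory at every step iff
`a` is in the memory infinitely often iff `a` is eventually in the memory
forever. -/
theorem gEvent_memory_tfae
    {V Γ : Type} [Fintype Γ] [DecidableEq Γ]
    (ΓF ΓG : Finset Γ) (hdisj : Disjoint ΓF ΓG) (γ : V → Finset Γ)
    (v : ℕ → V) (L : ℕ → Finset Γ)
    (hL : ∀ n, L (n + 1) = upd γ ΓF ΓG (v n) (L n))
    (a : Γ) (ha : a ∈ ΓG) (ha0 : a ∈ L 0) :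
    List.TFAE
      [(∀ n, a ∈ γ (v n)),
       (∀ n, a ∈ L n),
       (∀ i, ∃ j > i, a ∈ L j),
       (∃ i, ∀ j > i, a ∈ L j)] := by
  have haF : a ∉ ΓF := fun h => Finset.disjoint_left.mp hdisj h ha
  have key : ∀ n, a ∈ L (n + 1) ↔ a ∈ L n ∧ a ∈ γ (v n) := by
    intro n
    rw [hL n]
    simp [upd, Finset.mem_union, Finset.mem_inter, ha, haF]
  -- from membership at step m, recover membership at all earlier steps and labels
  have back : ∀ m k, k ≤ m → a ∈ L m → a ∈ L k := by
    intro m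
    induction m with
    | zero => intro k hk h; rw [Nat.le_zero.mp hk]; exact h
    | succ m ih =>
      intro k hk h
      rcases Nat.lt_or_ge k (m + 1) with h' | h'
      · exact ih k (Nat.lt_succ_iff.mp h') ((key m).mp h).1
      · have : k = m + 1 := le_antisymm hk h'
        rwa [this]
  tfae_have 1 → 2 := by
    intro h n
    induction n with
    | zero => exact ha0
    | succ n ih => exact (key n).mpr ⟨ih, h n⟩
  tfae_have 2 → 3 := fun h i => ⟨i + 1, Nat.lt_succ_self i, h (i + 1)⟩
  tfae_have 3 → 4 := by
    intro h
    refine ⟨0, fun j hj => ?_⟩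
    obtain ⟨m, hm, hmem⟩ := h j
    exact back m j (le_of_lt hm) hmem
  tfae_have 4 → 1 := by
    rintro ⟨i, hi⟩ n
    have h1 : a ∈ L (max (i + 1) (n + 1)) := hi _ (lt_of_lt_of_le (Nat.lt_succ_self i) (le_max_left _ _))
    have h2 : a ∈ L (n + 1) := back _ _ (le_max_right _ _) h1
    exact ((key n).mp h2).2
  tfae_finish
end

section
/- Let G = (A, (Γ, γ, φ)) be a Manna-Pnueli game over arena A = (V, E) such that every event of Γ occurs in at most one atom of φ. Let Γ_F and Γ_G be the sets of events occurring in F-atoms, respectively G-atoms, of φ (the local events), and let Γ_EL be the set of events occurring in GF- or FG-atoms of φ. Define the transformed arena A' with node set V × 2^{Γ_F ∪ Γ_G}, edges from (v, L) to (v', upd(v, L)) for every edge (v, v') of A, where upd(v, L) = ((L ∩ γ(v)) ∩ Γ_G) ∪ ((L ∪ γ(v)) ∩ Γ_F), and with (v, L) owned by the owner of v. Define the labeling γ'(v, L) = (γ(v) ∩ Γ_EL) ∪ L and let φ_1 be the Emerson-Lei formula obtained from φ by replacing every atom of shape F a or G a by GF a. Then for every node v ∈ V, the system player wins v in the MP game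 G if and only if the system player wins (v, Γ_G) in the EL game G_1 = (A', (Γ, γ', φ_1)). -/
/-- A game arena: a directed graph whose nodes are partitioned into system
nodes (`sys v` holds) and environment nodes, and in which every node has at
least one successor. -/
structure Arena (V : Type) where
  E : V → V → Prop
  sys : V → Prop
  succ_nonempty : ∀ v, ∃ w, E v w

/-- A play is an infinite path in the arena. -/
def Arena.IsPlay {V : Type} (A : Arena V) (π : ℕ → V) : Prop :=
  ∀ n, A.E (π n) (π (n + 1))

/-- A strategy assigns to every history `h = v₀...v_{n-1}` and current node
`v_n` a next node. -/
def Strategy (V : Type) : Type := List V → V → V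

/-- A system strategy is valid if it always chooses successors at system
nodes. -/
def Arena.ValidSysStrat {V : Type} (A : Arena V) (σ : Strategy V) : Prop :=
  ∀ (h : List V) (v : V), A.sys v → A.E v (σ h v)

/-- An environment strategy is valid if it always chooses successors at
environment nodes. -/
def Arena.ValidEnvStrat {V : Type} (A : Arena V) (σ : Strategy V) : Prop :=
  ∀ (h : List V) (v : V), ¬ A.sys v → A.E v (σ h v)

/-- A play `π` is compatible with a system strategy `σ` if at every system
node the play follows `σ`. -/
def Arena.SysCompatible {V : Type} (A : Arena V) (σ : Strategy V)
    (π : ℕ → V) : Prop :=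
  ∀ n, A.sys (π n) → π (n + 1) = σ ((List.range n).map π) (π n)

/-- A play `π` is compatible with an environment strategy `σ` if at every
environment node the play follows `σ`. -/
def Arena.EnvCompatible {V : Type} (A : Arena V) (σ : Strategy V)
    (π : ℕ → V) : Prop :=
  ∀ n, ¬ A.sys (π n) → π (n + 1) = σ ((List.range n).map π) (π n)

/-- The system player wins node `v` for the objective `O` if it has a valid
strategy such that all compatible plays starting at `v` are in `O`. -/
def Arena.SysWins {V : Type} (A : Arena V) (O : (ℕ → V) → Prop) (v : V) :
    Prop :=
  ∃ σ : Strategy V, A.ValidSysStrat σ ∧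
    ∀ π : ℕ → V, A.IsPlay π → π 0 = v → A.SysCompatible σ π → O π

/-- The environment player wins node `v` for the objective `O` if it has a
valid strategy such that all compatible plays starting at `v` are not in
`O`. -/
def Arena.EnvWins {V : Type} (A : Arena V) (O : (ℕ → V) → Prop) (v : V) :
    Prop :=
  ∃ σ : Strategy V, A.ValidEnvStrat σ ∧
    ∀ π : ℕ → V, A.IsPlay π → π 0 = v → A.EnvCompatible σ π → ¬ O π

/-- Manna-Pnueli formulas over a set `Γ` of events: positive Boolean formulas
over atoms `GF a`, `FG a`, `F a`, `G a`. -/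
inductive MPForm (Γ : Type) where
  | tt : MPForm Γ
  | ff : MPForm Γ
  | gf : Γ → MPForm Γ
  | fg : Γ → MPForm Γ
  | fa : Γ → MPForm Γ
  | ga : Γ → MPForm Γ
  | and : MPForm Γ → MPForm Γ → MPForm Γ
  | or : MPForm Γ → MPForm Γ → MPForm Γ

/-- Satisfaction of a Manna-Pnueli formula on an infinite sequence of sets of
events. -/
def MPForm.sat {Γ : Type} (π : ℕ → Finset Γ) : MPForm Γ → Prop
  | .tt => True
  | .ff => False
  | .gf a => ∀ i, ∃ j > i, a ∈ π j
  | .fg a => ∃ i, ∀ j > i, a ∈ π j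
  | .fa a => ∃ i, a ∈ π i
  | .ga a => ∀ i, a ∈ π i
  | .and φ ψ => φ.sat π ∧ ψ.sat π
  | .or φ ψ => φ.sat π ∨ ψ.sat π

/-- The events occurring in `F`-atoms of a Manna-Pnueli formula. -/
def MPForm.fEvents {Γ : Type} [DecidableEq Γ] : MPForm Γ → Finset Γ
  | .fa a => {a}
  | .and φ ψ => φ.fEvents ∪ ψ.fEvents
  | .or φ ψ => φ.fEvents ∪ ψ.fEvents
  | _ => ∅

/-- The events occurring in `G`-atoms of a Manna-Pnueli formula. -/
def MPForm.gEvents {Γ : Type} [DecidableEq Γ] : MPForm Γ → Finset Γ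
  | .ga a => {a}
  | .and φ ψ => φ.gEvents ∪ ψ.gEvents
  | .or φ ψ => φ.gEvents ∪ ψ.gEvents
  | _ => ∅

/-- The events occurring in `GF`-atoms of a Manna-Pnueli formula. -/
def MPForm.gfEvents {Γ : Type} [DecidableEq Γ] : MPForm Γ → Finset Γ
  | .gf a => {a}
  | .and φ ψ => φ.gfEvents ∪ ψ.gfEvents
  | .or φ ψ => φ.gfEvents ∪ ψ.gfEvents
  | _ => ∅

/-- The events occurring in `FG`-atoms of a Manna-Pnueli formula. -/
def MPForm.fgEvents {Γ : Type} [DecidableEq Γ] : MPForm Γ → Finset Γ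
  | .fg a => {a}
  | .and φ ψ => φ.fgEvents ∪ ψ.fgEvents
  | .or φ ψ => φ.fgEvents ∪ ψ.fgEvents
  | _ => ∅

/-- The number of atoms of a Manna-Pnueli formula in which the event `a`
occurs. -/
def MPForm.atomCount {Γ : Type} [DecidableEq Γ] (a : Γ) : MPForm Γ → ℕ
  | .gf b => if b = a then 1 else 0
  | .fg b => if b = a then 1 else 0
  | .fa b => if b = a then 1 else 0
  | .ga b => if b = a then 1 else 0
  | .and φ ψ => φ.atomCount a + ψ.atomCount a
  | .or φ ψ => φ.atomCount a + ψ.atomCount a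
  | _ => 0

/-- The transformed arena `A'` over `V × 2^Γ`, with edges from `(v, L)` to
`(v', upd(v, L))` for every edge `(v, v')` of `A`, and with `(v, L)` owned by
the owner of `v`. -/
def Arena.withMemory {V Γ : Type} [DecidableEq Γ] (A : Arena V)
    (γ : V → Finset Γ) (ΓF ΓG : Finset Γ) : Arena (V × Finset Γ) where
  E p q := A.E p.1 q.1 ∧ q.2 = upd γ ΓF ΓG p.1 p.2
  sys p := A.sys p.1
  succ_nonempty p := by
    obtain ⟨w, hw⟩ := A.succ_nonempty p.1
    exact ⟨(w, upd γ ΓF ΓG p.1 p.2), hw, rfl⟩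

/-- The Emerson-Lei formula `φ₁` obtained from a Manna-Pnueli formula `φ` by
replacing every atom of shape `F a` or `G a` by `GF a`. -/
def MPForm.toEL {Γ : Type} : MPForm Γ → MPForm Γ
  | .fa a => .gf a
  | .ga a => .gf a
  | .and φ ψ => .and φ.toEL ψ.toEL
  | .or φ ψ => .or φ.toEL ψ.toEL
  | φ => φ

/-!
On a play, `F a` holds iff some prefix has seen `a`, and `G a` iff every prefix has seen `a` at
each of its positions. The memory component of the transformed arena records exactly this about
the prefix read so far: it keeps a `Γ_F`-event once seen and drops a `Γ_G`-event once missed. Both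
facts are monotone along the play, so `F a` (resp. `G a`) holds iff `a` is infinitely often in
memory, which is what the replacing atom `GF a` says. Since every event occurs in only one atom,
the three kinds of events do not interfere, and since the memory is a function of the history,
strategies transfer between the two arenas in both directions.
-/

section Memory

variable {V Γ : Type} [DecidableEq Γ] (γ : V → Finset Γ) (ΓF ΓG : Finset Γ)

def memory (L : Finset Γ) (h : List V) : Finset Γ :=
  h.foldl (fun L w => upd γ ΓF ΓG w L) L

def attachMemoryList : Finset Γ → List V → List (V × Finset Γ)
  | _, [] => []
  | L, w :: t => (w, L) :: attachMemoryList (upd γ ΓF ΓG w L) t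

def attachMemory (L : Finset Γ) (π : ℕ → V) (n : ℕ) : V × Finset Γ :=
  (π n, memory γ ΓF ΓG L ((List.range n).map π))

variable {γ ΓF ΓG}

@[simp]
theorem memory_nil (L : Finset Γ) : memory γ ΓF ΓG L [] = L := rfl

@[simp]
theorem memory_cons (L : Finset Γ) (w : V) (h : List V) :
    memory γ ΓF ΓG L (w :: h) = memory γ ΓF ΓG (upd γ ΓF ΓG w L) h := rfl

theorem memory_concat (L : Finset Γ) (h : List V) (w : V) :
    memory γ ΓF ΓG L (h ++ [w]) = upd γ ΓF ΓG w (memory γ ΓF ΓG L h) := by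
  simp [memory, List.foldl_append]

theorem mem_memory_iff_exists {a : Γ} (haF : a ∈ ΓF) (haG : a ∉ ΓG) (L : Finset Γ)
    (h : List V) : a ∈ memory γ ΓF ΓG L h ↔ a ∈ L ∨ ∃ w ∈ h, a ∈ γ w := by
  induction h generalizing L with
  | nil => simp
  | cons w t ih => simp [ih, upd, haF, haG, or_assoc]

theorem mem_memory_iff_forall {a : Γ} (haF : a ∉ ΓF) (haG : a ∈ ΓG) (L : Finset Γ)
    (h : List V) : a ∈ memory γ ΓF ΓG L h ↔ a ∈ L ∧ ∀ w ∈ h, a ∈ γ w := by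
  induction h generalizing L with
  | nil => simp
  | cons w t ih => simp [ih, upd, haF, haG, and_assoc]

theorem notMem_memory {a : Γ} (haF : a ∉ ΓF) (haG : a ∉ ΓG) {L : Finset Γ} (haL : a ∉ L)
    (h : List V) : a ∉ memory γ ΓF ΓG L h := by
  induction h generalizing L with
  | nil => exact haL
  | cons w t ih => exact ih (by simp [upd, haF, haG])

theorem attachMemoryList_concat (L : Finset Γ) (h : List V) (w : V) :
    attachMemoryList γ ΓF ΓG L (h ++ [w]) =
      attachMemoryList γ ΓF ΓG L h ++ [(w, memory γ ΓF ΓG L h)] := by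
  induction h generalizing L with
  | nil => rfl
  | cons x t ih => simp [attachMemoryList, ih]

theorem attachMemoryList_range (L : Finset Γ) (π : ℕ → V) (n : ℕ) :
    attachMemoryList γ ΓF ΓG L ((List.range n).map π) =
      (List.range n).map (attachMemory γ ΓF ΓG L π) := by
  induction n with
  | zero => rfl
  | succ n ih => simp [List.range_succ, attachMemoryList_concat, ih, attachMemory]

theorem attachMemory_succ_snd (L : Finset Γ) (π : ℕ → V) (n : ℕ) :
    (attachMemory γ ΓF ΓG L π (n + 1)).2 =
      upd γ ΓF ΓG (π n) (attachMemory γ ΓF ΓG L π n).2 := by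
  simp [attachMemory, List.range_succ, memory_concat]

end Memory

namespace Arena

variable {V Γ : Type} [DecidableEq Γ] {A : Arena V} {γ : V → Finset Γ} {ΓF ΓG : Finset Γ}

theorem IsPlay.withMemory {π : ℕ → V} (hπ : A.IsPlay π) (L : Finset Γ) :
    (A.withMemory γ ΓF ΓG).IsPlay (attachMemory γ ΓF ΓG L π) :=
  fun n => ⟨hπ n, attachMemory_succ_snd L π n⟩

theorem IsPlay.eq_attachMemory {π' : ℕ → V × Finset Γ}
    (hπ' : (A.withMemory γ ΓF ΓG).IsPlay π') :
    π' = attachMemory γ ΓF ΓG (π' 0).2 (fun n => (π' n).1) := by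
  funext n
  refine Prod.ext rfl ?_
  induction n with
  | zero => rfl
  | succ n ih => rw [attachMemory_succ_snd, ← ih]; exact (hπ' n).2

theorem sysWins_withMemory_of_sysWins {O : (ℕ → V) → Prop}
    {O' : (ℕ → V × Finset Γ) → Prop} {L : Finset Γ}
    (hO : ∀ π, O π → O' (attachMemory γ ΓF ΓG L π)) {v : V}
    (hwin : A.SysWins O v) : (A.withMemory γ ΓF ΓG).SysWins O' (v, L) := by
  obtain ⟨σ, hσ, hσwin⟩ := hwin
  refine ⟨fun h p => (σ (h.map Prod.fst) p.1, upd γ ΓF ΓG p.1 p.2),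
    fun h p hp => ⟨hσ _ _ hp, rfl⟩, fun π' hπ' h0 hcomp => ?_⟩
  have hπ'0 : (π' 0).2 = L := by rw [h0]
  rw [hπ'.eq_attachMemory, hπ'0]
  refine hO _ (hσwin _ (fun n => (hπ' n).1) (by rw [h0]) fun n hs => ?_)
  rw [hcomp n hs]
  exact congrArg₂ σ (List.map_map ..) rfl

theorem sysWins_of_sysWins_withMemory {O : (ℕ → V) → Prop}
    {O' : (ℕ → V × Finset Γ) → Prop} {L : Finset Γ}
    (hO : ∀ π, O' (attachMemory γ ΓF ΓG L π) → O π) {v : V}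
    (hwin : (A.withMemory γ ΓF ΓG).SysWins O' (v, L)) : A.SysWins O v := by
  obtain ⟨σ', hσ', hσ'win⟩ := hwin
  refine ⟨fun h w => (σ' (attachMemoryList γ ΓF ΓG L h) (w, memory γ ΓF ΓG L h)).1,
    fun h w hw => (hσ' _ (w, _) hw).1, fun π hπ h0 hcomp => hO _ ?_⟩
  refine hσ'win _ (hπ.withMemory L) (by simp [attachMemory, h0]) fun n hs => ?_
  have hmove := hσ' ((List.range n).map (attachMemory γ ΓF ΓG L π)) _ hs
  refine Prod.ext ?_ ((attachMemory_succ_snd L π n).trans hmove.2.symm)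
  rw [← attachMemoryList_range]
  exact hcomp n hs

theorem sysWins_iff_sysWins_withMemory {O : (ℕ → V) → Prop}
    {O' : (ℕ → V × Finset Γ) → Prop} {L : Finset Γ}
    (hO : ∀ π, O' (attachMemory γ ΓF ΓG L π) ↔ O π) (v : V) :
    A.SysWins O v ↔ (A.withMemory γ ΓF ΓG).SysWins O' (v, L) :=
  ⟨sysWins_withMemory_of_sysWins fun π => (hO π).2,
    sysWins_of_sysWins_withMemory fun π => (hO π).1⟩

end Arena

theorem forall_exists_gt_exists_lt_iff (p : ℕ → Prop) :
    (∀ i, ∃ j > i, ∃ k < j, p k) ↔ ∃ k, p k :=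
  ⟨fun h => (h 0).elim fun _ ⟨_, hk⟩ => hk.imp fun _ => And.right,
    fun ⟨k, hk⟩ i => ⟨i + k + 1, by omega, k, by omega, hk⟩⟩

theorem forall_exists_gt_forall_lt_iff (p : ℕ → Prop) :
    (∀ i, ∃ j > i, ∀ k < j, p k) ↔ ∀ k, p k :=
  ⟨fun h k => (h k).elim fun _ ⟨hj, hk⟩ => hk k hj,
    fun h i => ⟨i + 1, by omega, fun k _ => h k⟩⟩

namespace MPForm

variable {Γ : Type} [DecidableEq Γ]

theorem sat_toEL_iff {ℓ ρ : ℕ → Finset Γ} (φ : MPForm Γ)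
    (hgf : ∀ a ∈ φ.gfEvents, ∀ n, a ∈ ℓ n ↔ a ∈ ρ n)
    (hfg : ∀ a ∈ φ.fgEvents, ∀ n, a ∈ ℓ n ↔ a ∈ ρ n)
    (hf : ∀ a ∈ φ.fEvents, ∀ n, a ∈ ℓ n ↔ ∃ k < n, a ∈ ρ k)
    (hg : ∀ a ∈ φ.gEvents, ∀ n, a ∈ ℓ n ↔ ∀ k < n, a ∈ ρ k) :
    φ.toEL.sat ℓ ↔ φ.sat ρ := by
  induction φ with
  | tt | ff => rfl
  | gf a => simp only [toEL, sat, hgf a (Finset.mem_singleton_self a)]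
  | fg a => simp only [toEL, sat, hfg a (Finset.mem_singleton_self a)]
  | fa a =>
    simp only [toEL, sat, hf a (Finset.mem_singleton_self a), forall_exists_gt_exists_lt_iff]
  | ga a =>
    simp only [toEL, sat, hg a (Finset.mem_singleton_self a), forall_exists_gt_forall_lt_iff]
  | and ψ χ ihψ ihχ | or ψ χ ihψ ihχ =>
    simp only [toEL, sat]
    rw [ihψ (fun a ha => hgf a (Finset.mem_union_left _ ha))
      (fun a ha => hfg a (Finset.mem_union_left _ ha))
      (fun a ha => hf a (Finset.mem_union_left _ ha))
      (fun a ha => hg a (Finset.mem_union_left _ ha)),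
      ihχ (fun a ha => hgf a (Finset.mem_union_right _ ha))
      (fun a ha => hfg a (Finset.mem_union_right _ ha))
      (fun a ha => hf a (Finset.mem_union_right _ ha))
      (fun a ha => hg a (Finset.mem_union_right _ ha))]

theorem indicator_events_le_atomCount (a : Γ) (φ : MPForm Γ) :
    (if a ∈ φ.fEvents then 1 else 0) + (if a ∈ φ.gEvents then 1 else 0) +
      (if a ∈ φ.gfEvents ∪ φ.fgEvents then 1 else 0) ≤ φ.atomCount a := by
  induction φ <;>
    simp only [fEvents, gEvents, gfEvents, fgEvents, atomCount, Finset.mem_union] at * <;> grind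

theorem disjoint_events {φ : MPForm Γ} (h : ∀ a, φ.atomCount a ≤ 1) :
    Disjoint φ.fEvents φ.gEvents ∧ Disjoint φ.fEvents (φ.gfEvents ∪ φ.fgEvents) ∧
      Disjoint φ.gEvents (φ.gfEvents ∪ φ.fgEvents) := by
  refine ⟨?_, ?_, ?_⟩ <;> refine Finset.disjoint_left.2 fun a ha hb => ?_ <;>
    have := (indicator_events_le_atomCount a φ).trans (h a) <;> grind

theorem sat_toEL_memory_iff {V : Type} (γ : V → Finset Γ) {φ : MPForm Γ}
    (h : ∀ a, φ.atomCount a ≤ 1) (π : ℕ → V) :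
    φ.toEL.sat (fun n => (γ (π n) ∩ (φ.gfEvents ∪ φ.fgEvents)) ∪
      memory γ φ.fEvents φ.gEvents φ.gEvents ((List.range n).map π)) ↔
      φ.sat (fun n => γ (π n)) := by
  obtain ⟨hFG, hFEL, hGEL⟩ := disjoint_events h
  have hEL : ∀ a ∈ φ.gfEvents ∪ φ.fgEvents, ∀ n,
      a ∈ (γ (π n) ∩ (φ.gfEvents ∪ φ.fgEvents)) ∪
        memory γ φ.fEvents φ.gEvents φ.gEvents ((List.range n).map π) ↔ a ∈ γ (π n) := by
    intro a ha n
    have hF := Finset.disjoint_right.1 hFEL ha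
    have hG := Finset.disjoint_right.1 hGEL ha
    simp [ha, notMem_memory hF hG hG]
  apply sat_toEL_iff
  · exact fun a ha => hEL a (Finset.mem_union_left _ ha)
  · exact fun a ha => hEL a (Finset.mem_union_right _ ha)
  · intro a ha n
    have hG := Finset.disjoint_left.1 hFG ha
    simp [Finset.disjoint_left.1 hFEL ha, mem_memory_iff_exists ha hG, hG]
  · intro a ha n
    have hF := Finset.disjoint_right.1 hFG ha
    simp [Finset.disjoint_left.1 hGEL ha, mem_memory_iff_forall hF ha, ha]

end MPForm

theorem mp_game_iff_el_game_general
    {V Γ : Type} [DecidableEq Γ]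
    (A : Arena V) (γ : V → Finset Γ) (φ : MPForm Γ)
    (hunique : ∀ a : Γ, φ.atomCount a ≤ 1)
    (v : V) :
    A.SysWins (fun π => φ.sat (fun n => γ (π n))) v ↔
    (A.withMemory γ φ.fEvents φ.gEvents).SysWins
      (fun π' => φ.toEL.sat
        (fun n => ((γ (π' n).1 ∩ (φ.gfEvents ∪ φ.fgEvents)) ∪ (π' n).2)))
      (v, φ.gEvents) :=
  Arena.sysWins_iff_sysWins_withMemory (fun π => MPForm.sat_toEL_memory_iff γ hunique π) v

/-- reduction of Manna-Pnueli games to Emerson-Lei games via an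
arena transformation with memory for local events. The system player wins `v`
in the MP game `G = (A, (Γ, γ, φ))` iff it wins `(v, Γ_G)` in the EL game
`G₁ = (A', (Γ, γ', φ₁))`. -/
theorem mp_game_iff_el_game
    {V Γ : Type} [Fintype V] [Fintype Γ] [DecidableEq Γ]
    (A : Arena V) (γ : V → Finset Γ) (φ : MPForm Γ)
    (hunique : ∀ a : Γ, φ.atomCount a ≤ 1)
    (v : V) :
    A.SysWins (fun π => φ.sat (fun n => γ (π n))) v ↔
    (A.withMemory γ φ.fEvents φ.gEvents).SysWins
      (fun π' => φ.toEL.sat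
        (fun n => ((γ (π' n).1 ∩ (φ.gfEvents ∪ φ.fgEvents)) ∪ (π' n).2)))
      (v, φ.gEvents) :=
  mp_game_iff_el_game_general A γ φ hunique v
end
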